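/- arXiv:1010.2780 — 5 statements merged into one kernel-verified Lean document; each statement's English description precedes it below -/
import Mathlib

section
/- (Gleason's Lemma, general unicritical version) Let d ≥ 2 and define Γ_0 = 0, Γ_{N+1} = Γ_N^d + b in ℤ[b]. For every N ≥ 1, all roots of Γ_N in an algebraic closure of ℚ are simple, i.e., Γ_N is separable. -/
/-!
Since `Γ (n + 1) = Γ n ^ d + X`, the derivative of every `Γ N` is `≡ 1` modulo `d`. As `Γ N` is
monic, its roots are algebraic integers, so at a root the derivative has the form `d x + 1` with
`x` an algebraic integer. If it vanished, `-1/d` would be an algebraic integer in `ℚ`, hence an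
integer, which is impossible for `d ≥ 2`.
-/

open Polynomial

theorem Polynomial.Monic.add_X_of_one_lt_natDegree {R : Type*} [Semiring R] [Nontrivial R]
    {p : R[X]} (hp : p.Monic) (h : 1 < p.natDegree) :
    (p + X).Monic ∧ (p + X).natDegree = p.natDegree := by
  have hlt : degree (X : R[X]) < degree p := by
    rw [degree_X, degree_eq_natDegree hp.ne_zero]
    exact_mod_cast h
  exact ⟨hp.add_of_left hlt, natDegree_add_eq_left_of_degree_lt hlt⟩

theorem Int.isUnit_of_isIntegral_of_mul_eq_one {K : Type*} [Field K] [CharZero K] {d : ℤ}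
    {x : K} (hx : IsIntegral ℤ x) (h : (d : K) * x = 1) : IsUnit d := by
  have hd : (d : K) ≠ 0 := left_ne_zero_of_mul_eq_one h
  have hxq : algebraMap ℚ K (d : ℚ)⁻¹ = x := by
    rw [map_inv₀, map_intCast, eq_inv_of_mul_eq_one_right h]
  have hint : IsIntegral ℤ (d : ℚ)⁻¹ := by
    rwa [← isIntegral_algebraMap_iff (algebraMap ℚ K).injective, hxq]
  obtain ⟨z, hz⟩ := IsIntegrallyClosed.isIntegral_iff.mp hint
  refine IsUnit.of_mul_eq_one z (Int.cast_injective (α := ℚ) ?_)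
  rw [eq_intCast] at hz
  rw [Int.cast_mul, Int.cast_one, hz, mul_inv_cancel₀ (by exact_mod_cast hd)]

theorem Polynomial.separable_map_of_derivative_eq_mul_add_one {K : Type*} [Field K] [CharZero K]
    [IsAlgClosed K] {f h : ℤ[X]} (hf : f.Monic) {d : ℤ} (hd : ¬IsUnit d)
    (hder : derivative f = C d * h + 1) : (f.map (Int.castRingHom K)).Separable := by
  rw [Separable, derivative_map, ← algebraMap_int_eq,
    isCoprime_iff_aeval_ne_zero_of_isAlgClosed (k := K) K]
  intro α
  rw [aeval_map_algebraMap, aeval_map_algebraMap, or_iff_not_imp_left, not_not]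
  intro hroot
  have hα : IsIntegral ℤ α := ⟨f, hf, by rwa [← aeval_def]⟩
  have hx : IsIntegral ℤ (aeval α h) := by
    simpa [aeval_subalgebra_coe, mem_integralClosure_iff] using
      (aeval (⟨α, hα⟩ : integralClosure ℤ K) h).2
  rw [hder, map_add, map_mul, aeval_C, map_one, algebraMap_int_eq, eq_intCast]
  intro hzero
  exact hd (Int.isUnit_of_isIntegral_of_mul_eq_one hx.neg (by linear_combination -hzero))

section Iteration

variable {d : ℕ} {Γ : ℕ → ℤ[X]} (hrec : ∀ n, Γ (n + 1) = Γ n ^ d + X)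
include hrec

theorem monic_and_natDegree_of_iterate (hd : 2 ≤ d) (h0 : Γ 0 = 0) (n : ℕ) :
    (Γ (n + 1)).Monic ∧ (Γ (n + 1)).natDegree = d ^ n := by
  induction n with
  | zero => simp [hrec, h0, zero_pow (by omega : d ≠ 0)]
  | succ n ih =>
    obtain ⟨hmonic, hdeg⟩ := ih
    have hdeg_pow : (Γ (n + 1) ^ d).natDegree = d ^ (n + 1) := by
      rw [hmonic.natDegree_pow, hdeg, pow_succ']
    rw [hrec, ← hdeg_pow]
    exact (hmonic.pow d).add_X_of_one_lt_natDegree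
      (hdeg_pow ▸ Nat.one_lt_pow n.succ_ne_zero (by omega))

theorem derivative_iterate_eq (n : ℕ) :
    derivative (Γ (n + 1)) = C (d : ℤ) * (Γ n ^ (d - 1) * derivative (Γ n)) + 1 := by
  rw [hrec, derivative_add, derivative_pow, derivative_X]
  ring

end Iteration

theorem gleason_separable (d : ℕ) (hd : 2 ≤ d) (Γ : ℕ → Polynomial ℤ)
    (h0 : Γ 0 = 0) (hrec : ∀ n, Γ (n + 1) = (Γ n) ^ d + X)
    (N : ℕ) (hN : 1 ≤ N) :
    ((Γ N).map (Int.castRingHom (AlgebraicClosure ℚ))).Separable := by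
  obtain ⟨n, rfl⟩ : ∃ n, N = n + 1 := ⟨N - 1, by omega⟩
  have hd_unit : ¬IsUnit (d : ℤ) := by
    rw [Int.isUnit_iff]
    omega
  exact separable_map_of_derivative_eq_mul_add_one
    (monic_and_natDegree_of_iterate hrec hd h0 n).1 hd_unit (derivative_iterate_eq hrec n)
end

section
/- Let ν be a valuation extending ν_2, d = 2^e with e ≥ 1, b ν-integral, and F(z) = z^d + b. If x, y are ν-integral with ν(F(x) - F(y)) > 0, then ν(x - y) > 0. -/
/-! Since `v 2 > 0`, `x + y = (x - y) + 2y` has the same valuation as `x - y` when the latter is `0`,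
so `x² - y² = (x - y)(x + y)` is again a unit; iterating, so is `x ^ 2 ^ e - y ^ 2 ^ e = F x - F y`. -/

namespace AddValuation

variable {R Γ₀ : Type*} [CommRing R] [LinearOrderedAddCommMonoidWithTop Γ₀]
  (v : AddValuation R Γ₀)

theorem map_add_eq_map_sub_of_lt {x y : R} (h : v (x - y) < v (2 * y)) :
    v (x + y) = v (x - y) := by
  rw [show x + y = (x - y) + 2 * y by ring]
  exact v.map_add_eq_of_lt_left h

theorem map_sq_sub_sq_eq_zero {x y : R} (h2 : 0 < v 2) (hy : 0 ≤ v y)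
    (hxy : v (x - y) = 0) : v (x ^ 2 - y ^ 2) = 0 := by
  have h2y : v (x - y) < v (2 * y) := by
    rw [hxy, v.map_mul]
    exact add_pos_of_pos_of_nonneg h2 hy
  rw [sq_sub_sq, v.map_mul, v.map_add_eq_map_sub_of_lt h2y, hxy, add_zero]

theorem map_pow_two_pow_sub_eq_zero {x y : R} (h2 : 0 < v 2) (hy : 0 ≤ v y)
    (hxy : v (x - y) = 0) (k : ℕ) : v (x ^ 2 ^ k - y ^ 2 ^ k) = 0 := by
  induction k with
  | zero => simpa using hxy
  | succ k ih =>
    rw [pow_succ, pow_mul, pow_mul]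
    exact v.map_sq_sub_sq_eq_zero h2 (by rw [v.map_pow]; exact nsmul_nonneg hy _) ih

end AddValuation

theorem valuation_sub_pos_of_image_general {K : Type*} [Field K] [CharZero K]
    (v : AddValuation K (WithTop ℝ)) (hv2 : v (2 : K) = 1)
    (e : ℕ) (d : ℕ) (hd : d = 2 ^ e)
    (b : K) (F : K → K) (hF : ∀ z, F z = z ^ d + b)
    (x y : K) (hx : 0 ≤ v x) (hy : 0 ≤ v y) (hFxy : 0 < v (F x - F y)) :
    0 < v (x - y) := by
  refine lt_of_le_of_ne (v.map_le_sub hx (by simpa using hy)) fun hxy => ?_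
  have h2 : 0 < v 2 := by rw [hv2]; exact zero_lt_one
  have hFxy' : F x - F y = x ^ 2 ^ e - y ^ 2 ^ e := by rw [hF, hF, hd]; ring
  rw [hFxy', v.map_pow_two_pow_sub_eq_zero h2 hy hxy.symm] at hFxy
  exact hFxy.false

theorem valuation_sub_pos_of_image {K : Type*} [Field K] [CharZero K]
    (v : AddValuation K (WithTop ℝ)) (hv2 : v (2 : K) = 1)
    (e : ℕ) (he : 1 ≤ e) (d : ℕ) (hd : d = 2 ^ e)
    (b : K) (hb : 0 ≤ v b) (F : K → K) (hF : ∀ z, F z = z ^ d + b)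
    (x y : K) (hx : 0 ≤ v x) (hy : 0 ≤ v y) (hFxy : 0 < v (F x - F y)) :
    0 < v (x - y) :=
  valuation_sub_pos_of_image_general v hv2 e d hd b F hF x y hx hy hFxy
end

section
/- Let d ≥ 2 with a prime factor p, and Γ_n ∈ ℤ[b] defined by Γ_0 = 0, Γ_{n+1} = Γ_n^d + b. Let N > n ≥ 2, let ω be a d-th root of unity with ν(1 - ω) < 1 for some valuation ν extending ν_p, and set Δ = Γ_{N-1} - ω·Γ_{n-1} ∈ ℤ[ω][b]. Then every root of Δ in ℚ̄ is a simple root. -/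
/-!
Every coefficient of `Δ` is an algebraic integer and `Δ` is monic, because `Γ_{N-1}` is monic of
degree `d^(N-2) > d^(n-2)`; hence every root `β` of `Δ` is an algebraic integer and `v β ≥ 0`.
Since `Γ_{m+1}' = d Γ_m^(d-1) Γ_m' + 1`, we have `Γ_m' ≡ 1 (mod p)` for `m ≥ 1`, so
`Δ'(β) = (1 - ω) + p s` with `s` integral. As `v (p s) ≥ 1 > v (1 - ω)`, this is nonzero.
-/

open Polynomial

lemma AddValuation.nonneg_of_isIntegral {R Γ₀ : Type*} [CommRing R]
    [LinearOrderedAddCommGroupWithTop Γ₀] (v : AddValuation R Γ₀) {x : R}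
    (hx : IsIntegral ℤ x) : 0 ≤ v x :=
  (Valuation.integer.integers v).mem_of_integral hx.tower_top

lemma IsIntegral.eval_map_intCastRingHom {A : Type*} [CommRing A] {x : A} (hx : IsIntegral ℤ x)
    (q : ℤ[X]) : IsIntegral ℤ ((q.map (Int.castRingHom A)).eval x) := by
  rw [← algebraMap_int_eq, eval_map_algebraMap]
  exact adjoin_le_integralClosure hx (aeval_mem_adjoin_singleton ℤ x)

lemma IsIntegral.of_eval_eq_zero_of_isIntegral_coeff {R A : Type*} [CommRing R] [CommRing A]
    [Algebra R A] [Nontrivial A] {f : A[X]} {x : A} (hf : f.Monic)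
    (hcoeff : ∀ i, IsIntegral R (f.coeff i)) (hx : f.eval x = 0) : IsIntegral R x := by
  refine IsIntegral.of_aeval_monic_of_isIntegral_coeff hf ?_ (hx ▸ isIntegral_zero) hcoeff
  intro hdeg
  rw [hf.natDegree_eq_zero.mp hdeg, eval_one] at hx
  exact one_ne_zero hx

lemma AddValuation.add_mul_ne_zero_of_lt {R Γ₀ : Type*} [Ring R]
    [LinearOrderedAddCommMonoidWithTop Γ₀] (v : AddValuation R Γ₀) {a b c : R}
    (h : v a < v b) (hc : 0 ≤ v c) : a + b * c ≠ 0 := by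
  intro hzero
  have hv : v (b * c) = v a := by rw [eq_neg_of_add_eq_zero_right hzero, v.map_neg]
  exact (h.trans_le (le_add_of_nonneg_right hc)).ne' (v.map_mul b c ▸ hv)

noncomputable def gammaPoly (d : ℕ) : ℕ → ℤ[X]
  | 0 => 0
  | m + 1 => gammaPoly d m ^ d + X

lemma eq_gammaPoly {d : ℕ} {Γ : ℕ → ℤ[X]} (h0 : Γ 0 = 0)
    (hrec : ∀ m, Γ (m + 1) = Γ m ^ d + X) : Γ = gammaPoly d := by
  funext m
  induction m with
  | zero => exact h0
  | succ m ih => rw [hrec, ih, gammaPoly]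

lemma gammaPoly_one {d : ℕ} (hd : d ≠ 0) : gammaPoly d 1 = X := by
  simp [gammaPoly, hd]

lemma natDegree_gammaPoly_succ {d : ℕ} (hd : 2 ≤ d) (m : ℕ) :
    (gammaPoly d (m + 1)).natDegree = d ^ m := by
  induction m with
  | zero => rw [gammaPoly_one (by omega), natDegree_X, pow_zero]
  | succ m ih =>
    have hpow : (gammaPoly d (m + 1) ^ d).natDegree = d ^ (m + 1) := by
      rw [natDegree_pow, ih, pow_succ']
    have hX : (X : ℤ[X]).natDegree < (gammaPoly d (m + 1) ^ d).natDegree := by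
      rw [hpow, natDegree_X]
      exact Nat.one_lt_pow (by omega) (by omega)
    rw [gammaPoly, natDegree_add_eq_left_of_natDegree_lt hX, hpow]

lemma monic_gammaPoly_succ {d : ℕ} (hd : 2 ≤ d) (m : ℕ) : (gammaPoly d (m + 1)).Monic := by
  induction m with
  | zero =>
    rw [gammaPoly_one (by omega)]
    exact monic_X
  | succ m ih =>
    refine (ih.pow d).add_of_left (degree_lt_degree ?_)
    rw [natDegree_X, natDegree_pow, natDegree_gammaPoly_succ hd, ← pow_succ']
    exact Nat.one_lt_pow (by omega) (by omega)

lemma degree_gammaPoly_succ_lt {d m M : ℕ} (hd : 2 ≤ d) (h : m < M) :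
    (gammaPoly d (m + 1)).degree < (gammaPoly d (M + 1)).degree := by
  refine degree_lt_degree ?_
  rw [natDegree_gammaPoly_succ hd, natDegree_gammaPoly_succ hd]
  exact Nat.pow_lt_pow_right (by omega) h

lemma C_dvd_derivative_gammaPoly_succ_sub_one (d m : ℕ) :
    C (d : ℤ) ∣ derivative (gammaPoly d (m + 1)) - 1 := by
  rw [gammaPoly, derivative_add, derivative_X, add_sub_cancel_right, derivative_pow, mul_assoc]
  exact dvd_mul_right _ _

noncomputable def deltaPoly {K : Type*} [CommRing K] (d N n : ℕ) (ω : K) : K[X] :=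
  (gammaPoly d (N - 1)).map (Int.castRingHom K) -
    C ω * (gammaPoly d (n - 1)).map (Int.castRingHom K)

section deltaPoly

variable {K : Type*} [CommRing K] {d N n : ℕ}

lemma monic_deltaPoly [Nontrivial K] (hd : 2 ≤ d) (hn : 2 ≤ n) (hNn : n < N) (ω : K) :
    (deltaPoly d N n ω).Monic := by
  obtain ⟨M, hM⟩ : ∃ M, N - 1 = M + 1 := ⟨N - 2, by omega⟩
  obtain ⟨m, hm⟩ : ∃ m, n - 1 = m + 1 := ⟨n - 2, by omega⟩
  rw [deltaPoly, hM, hm, ← smul_eq_C_mul]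
  refine ((monic_gammaPoly_succ hd M).map _).sub_of_left ((degree_smul_le _ _).trans_lt ?_)
  rw [(monic_gammaPoly_succ hd m).degree_map, (monic_gammaPoly_succ hd M).degree_map]
  exact degree_gammaPoly_succ_lt hd (by omega)

lemma isIntegral_coeff_deltaPoly {ω : K} (hω : IsIntegral ℤ ω) (i : ℕ) :
    IsIntegral ℤ ((deltaPoly d N n ω).coeff i) := by
  rw [deltaPoly, coeff_sub, coeff_C_mul, coeff_map, coeff_map]
  exact isIntegral_algebraMap.sub (hω.mul isIntegral_algebraMap)

lemma exists_eval_derivative_deltaPoly {p : ℕ} (hpd : p ∣ d) (hn : 2 ≤ n) (hN : 2 ≤ N)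
    {ω β : K} (hω : IsIntegral ℤ ω) (hβ : IsIntegral ℤ β) :
    ∃ s, IsIntegral ℤ s ∧ (derivative (deltaPoly d N n ω)).eval β = (1 - ω) + p * s := by
  obtain ⟨M, hM⟩ : ∃ M, N - 1 = M + 1 := ⟨N - 2, by omega⟩
  obtain ⟨m, hm⟩ : ∃ m, n - 1 = m + 1 := ⟨n - 2, by omega⟩
  have hpd' : C (p : ℤ) ∣ C (d : ℤ) := map_dvd C (Int.natCast_dvd_natCast.mpr hpd)
  obtain ⟨Q₁, hQ₁⟩ := hpd'.trans (C_dvd_derivative_gammaPoly_succ_sub_one d M)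
  obtain ⟨Q₂, hQ₂⟩ := hpd'.trans (C_dvd_derivative_gammaPoly_succ_sub_one d m)
  set f := Int.castRingHom K
  refine ⟨(Q₁.map f).eval β - ω * (Q₂.map f).eval β,
    (hβ.eval_map_intCastRingHom Q₁).sub (hω.mul (hβ.eval_map_intCastRingHom Q₂)), ?_⟩
  rw [deltaPoly, hM, hm, derivative_sub, derivative_C_mul, derivative_map, derivative_map,
    eq_add_of_sub_eq' hQ₁, eq_add_of_sub_eq' hQ₂]
  simp only [Polynomial.map_add, Polynomial.map_one, Polynomial.map_mul, Polynomial.map_natCast,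
    eval_natCast, eval_sub, eval_add, eval_mul, eval_one, eval_C, eq_intCast, Int.cast_natCast]
  ring

end deltaPoly

open Polynomial in
theorem delta_roots_simple_general (d : ℕ) (hd : 2 ≤ d) (p : ℕ) (hpd : p ∣ d)
    (Γ : ℕ → Polynomial ℤ) (h0 : Γ 0 = 0) (hrec : ∀ m, Γ (m + 1) = (Γ m) ^ d + X)
    (N n : ℕ) (hn : 2 ≤ n) (hNn : n < N)
    (ω : AlgebraicClosure ℚ) (hω : ω ^ d = 1)
    (v : AddValuation (AlgebraicClosure ℚ) (WithTop ℝ))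
    (hvp : v (p : AlgebraicClosure ℚ) = 1)
    (hω1 : v (1 - ω) < 1)
    (Δ : Polynomial (AlgebraicClosure ℚ))
    (hΔ : Δ = (Γ (N - 1)).map (Int.castRingHom (AlgebraicClosure ℚ)) -
        C ω * (Γ (n - 1)).map (Int.castRingHom (AlgebraicClosure ℚ))) :
    ∀ β : AlgebraicClosure ℚ, Δ.eval β = 0 → (derivative Δ).eval β ≠ 0 := by
  obtain rfl : Γ = gammaPoly d := eq_gammaPoly h0 hrec
  obtain rfl : Δ = deltaPoly d N n ω := hΔ
  intro β hβ
  have hω_int : IsIntegral ℤ ω := .of_pow (by omega) (hω ▸ isIntegral_one)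
  have hβ_int : IsIntegral ℤ β := IsIntegral.of_eval_eq_zero_of_isIntegral_coeff
    (monic_deltaPoly hd hn hNn ω) (isIntegral_coeff_deltaPoly hω_int) hβ
  obtain ⟨s, hs_int, hs⟩ :=
    exists_eval_derivative_deltaPoly (N := N) hpd hn (by omega) hω_int hβ_int
  rw [hs]
  exact v.add_mul_ne_zero_of_lt (hω1.trans_eq hvp.symm) (v.nonneg_of_isIntegral hs_int)

open Polynomial in
theorem delta_roots_simple (d : ℕ) (hd : 2 ≤ d) (p : ℕ) (hp : p.Prime) (hpd : p ∣ d)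
    (Γ : ℕ → Polynomial ℤ) (h0 : Γ 0 = 0) (hrec : ∀ m, Γ (m + 1) = (Γ m) ^ d + X)
    (N n : ℕ) (hn : 2 ≤ n) (hNn : n < N)
    (ω : AlgebraicClosure ℚ) (hω : ω ^ d = 1)
    (v : AddValuation (AlgebraicClosure ℚ) (WithTop ℝ))
    (hvp : v (p : AlgebraicClosure ℚ) = 1)
    (hω1 : v (1 - ω) < 1)
    (Δ : Polynomial (AlgebraicClosure ℚ))
    (hΔ : Δ = (Γ (N - 1)).map (Int.castRingHom (AlgebraicClosure ℚ)) -
        C ω * (Γ (n - 1)).map (Int.castRingHom (AlgebraicClosure ℚ))) :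
    ∀ β : AlgebraicClosure ℚ, Δ.eval β = 0 → (derivative Δ).eval β ≠ 0 :=
  delta_roots_simple_general d hd p hpd Γ h0 hrec N n hn hNn ω hω v hvp hω1 Δ hΔ
end

section
/- (Douady–Hubbard / Gleason for preperiodic parameters) Let d ≥ 2 and Γ_n ∈ ℤ[b] with Γ_0 = 0, Γ_{n+1} = Γ_n^d + b. For N > n ≥ 1, every multiple root of Γ_N - Γ_n (in ℚ̄) is a root of Γ_{N-1} - Γ_{n-1}. -/
/-!
Write `g m = Γ_m(β)` and `u m = Γ_m'(β)`, so that `g (m+1) = g m ^ d + β` and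
`u (m+1) = 1 + d * g m ^ (d-1) * u m`; `β` is an algebraic integer, being a root of the monic
`Γ_N - Γ_n`. If `g N = g n` and `u N = u n` but `x = g (N-1) ≠ y = g (n-1)`, then `ζ = x / y` is a
`d`-th root of unity `≠ 1` with `ζ ^ (d-1) * u (N-1) = u (n-1)`. As `u m ≡ 1 mod d` for `m ≥ 1`,
this gives `ζ ≡ 1 mod d`, and if `ζ` has order `e` then `d ^ (e-1)` divides
`e = ∏_{0<k<e} (1 - ζ^k)`, which forces `d = e = 2`. For `d = 2` and `x = -y`, the congruence
`g m * u m ≡ g m mod 2` makes `(g (N-2) + g (n-2))^2` both `≡ 1` and `≡ 0 mod 2`.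
-/

open Polynomial

theorem isIntegral_aeval {R A : Type*} [CommRing R] [CommRing A] [Algebra R A] {x : A}
    (hx : IsIntegral R x) (p : R[X]) : IsIntegral R (aeval x p) :=
  adjoin_le_integralClosure hx (by rw [Algebra.adjoin_singleton_eq_range_aeval]; exact ⟨p, rfl⟩)

section CharZero

variable {K : Type*} [Field K] [CharZero K]

theorem natCast_dvd_of_natCast_mul_eq {a b : ℕ} {t : K} (ht : IsIntegral ℤ t)
    (h : (a : K) * t = b) : a ∣ b := by
  rcases eq_or_ne a 0 with rfl | ha
  · simpa [eq_comm] using h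
  have hta : t = algebraMap ℚ K ((b : ℚ) / a) := by
    rw [map_div₀, map_natCast, map_natCast, eq_div_iff (Nat.cast_ne_zero.2 ha), mul_comm, h]
  obtain ⟨z, hz⟩ := IsIntegrallyClosed.isIntegral_iff.1
    ((isIntegral_algebraMap_iff (algebraMap ℚ K).injective).1 (hta ▸ ht))
  have hza : (a : ℚ) * z = b := by
    rw [← eq_intCast (algebraMap ℤ ℚ), hz]
    field_simp
  exact Int.natCast_dvd_natCast.1 ⟨z, by exact_mod_cast hza.symm⟩

theorem eq_two_of_pow_eq_one_of_sub_one_eq_mul {d : ℕ} {ζ α : K} (hζ : ζ ^ d = 1) (hζ1 : ζ ≠ 1)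
    (hα : IsIntegral ℤ α) (h : ζ - 1 = d * α) : d = 2 := by
  have hd : 0 < d := Nat.pos_of_ne_zero <| by
    rintro rfl
    exact hζ1 (by simpa [sub_eq_zero] using h)
  set e := orderOf ζ
  have hed : e ∣ d := orderOf_dvd_of_pow_eq_one hζ
  have he : 0 < e := Nat.pos_of_dvd_of_pos hed hd
  have he1 : e ≠ 1 := fun h => hζ1 (orderOf_eq_one_iff.1 h)
  obtain ⟨z, hz, he_eq⟩ :=
    (IsPrimitiveRoot.orderOf ζ).self_sub_one_pow_dvd_order (k := e - 1) (by omega)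
  have hzint : IsIntegral ℤ z :=
    adjoin_le_integralClosure ((IsPrimitiveRoot.orderOf ζ).isIntegral he) hz
  -- `e = ∏_{0<k<e} (1 - ζ^k)` is divisible by `(ζ - 1)^(e-1)`, hence by `d^(e-1)`
  have hdvd : d ^ (e - 1) ∣ e := natCast_dvd_of_natCast_mul_eq (hzint.mul (hα.pow (e - 1)))
    (by rw [he_eq, h]; push_cast; ring)
  have hle : d ^ (e - 1) ≤ e := Nat.le_of_dvd he hdvd
  have hed' : e ≤ d := Nat.le_of_dvd hd hed
  obtain ⟨k, hk⟩ : ∃ k, e = k + 2 := ⟨e - 2, by omega⟩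
  rw [hk, show k + 2 - 1 = k + 1 by omega, pow_succ] at hle
  have : k < d ^ k := Nat.lt_pow_self (by omega : 1 < d)
  nlinarith

theorem eq_or_eq_neg_of_pow_eq_of_pow_pred_mul_eq {d : ℕ} (hd : d ≠ 0) {x y A B : K}
    (hA : IsIntegral ℤ A) (hB : IsIntegral ℤ B) (hpow : x ^ d = y ^ d)
    (hder : x ^ (d - 1) * (1 + d * A) = y ^ (d - 1) * (1 + d * B)) :
    x = y ∨ d = 2 ∧ x = -y ∧ 1 + d * A = -(1 + d * B) := by
  by_cases hxy : x = y
  · exact .inl hxy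
  right
  have hy : y ≠ 0 := by
    rintro rfl
    exact hxy (pow_eq_zero_iff hd |>.1 (hpow.trans (zero_pow hd)))
  set ζ := x / y
  have hx : x = ζ * y := (div_mul_cancel₀ x hy).symm
  have hζd : ζ ^ d = 1 := by rw [div_pow, hpow, div_self (pow_ne_zero d hy)]
  have hζ1 : ζ ≠ 1 := fun h => hxy (by rw [hx, h, one_mul])
  have hζint : IsIntegral ℤ ζ :=
    ⟨X ^ d - C 1, monic_X_pow_sub_C 1 hd, by simp [eval₂_sub, hζd]⟩
  have hζu : ζ ^ (d - 1) * (1 + d * A) = 1 + d * B :=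
    mul_left_cancel₀ (pow_ne_zero (d - 1) hy) (by rw [← hder, hx, mul_pow]; ring)
  have hζd' : ζ ^ (d - 1) * ζ = 1 := by
    rw [← pow_succ, Nat.sub_add_cancel (Nat.one_le_iff_ne_zero.2 hd), hζd]
  have hsub : ζ - 1 = d * (A - ζ * B) := by
    linear_combination (1 + d * A) * hζd' - ζ * hζu
  obtain rfl := eq_two_of_pow_eq_one_of_sub_one_eq_mul hζd hζ1 (hA.sub (hζint.mul hB)) hsub
  have hζneg : ζ = -1 := by
    have : (ζ - 1) * (ζ + 1) = 0 := by linear_combination hζd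
    exact eq_neg_of_add_eq_zero_left
      ((mul_eq_zero.1 this).resolve_left (sub_ne_zero.2 hζ1))
  refine ⟨rfl, by rw [hx, hζneg, neg_one_mul], ?_⟩
  rw [← hζu, hζneg]
  ring

theorem one_add_two_mul_ne_neg_of_sq_add_eq_neg {β a b s t : K} (hβ : IsIntegral ℤ β)
    (ha : IsIntegral ℤ a) (hb : IsIntegral ℤ b) (hs : IsIntegral ℤ s) (ht : IsIntegral ℤ t)
    (hg : a ^ 2 + β = -(b ^ 2 + β)) : 1 + 2 * (a + 2 * s) ≠ -(1 + 2 * (b + 2 * t)) := by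
  intro hu
  -- `(a + b)^2` is `1` mod `2` by `hu` and `0` mod `2` by `hg`
  have hunit : ((2 : ℕ) : K) * (a * b - β - 2 * (s + t) - 2 * (s + t) ^ 2) = ((1 : ℕ) : K) := by
    push_cast
    linear_combination -hg + (a + b - 1 - 2 * (s + t)) / 2 * hu
  have hint : IsIntegral ℤ (a * b - β - 2 * (s + t) - 2 * (s + t) ^ 2) := by
    have h2 : IsIntegral ℤ (2 : K) := by exact_mod_cast isIntegral_natCast (R := ℤ) (B := K) 2
    exact (((ha.mul hb).sub hβ).sub (h2.mul (hs.add ht))).sub (h2.mul ((hs.add ht).pow 2))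
  exact absurd (natCast_dvd_of_natCast_mul_eq hint hunit) (by norm_num)

end CharZero

namespace GleasonPolynomial

variable {d : ℕ} {Γ : ℕ → ℤ[X]}

theorem monic_and_natDegree_succ (hd : 2 ≤ d) (h0 : Γ 0 = 0)
    (hrec : ∀ m, Γ (m + 1) = Γ m ^ d + X) (m : ℕ) :
    (Γ (m + 1)).Monic ∧ (Γ (m + 1)).natDegree = d ^ m := by
  induction m with
  | zero => simp [hrec, h0, zero_pow (by omega : d ≠ 0)]
  | succ m ih =>
    have hpow : (Γ (m + 1) ^ d).natDegree = d ^ (m + 1) := by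
      rw [ih.1.natDegree_pow, ih.2, pow_succ']
    have hlt : (X : ℤ[X]).degree < (Γ (m + 1) ^ d).degree := by
      rw [degree_X, degree_eq_natDegree (ih.1.pow d).ne_zero, hpow]
      exact_mod_cast Nat.one_lt_pow (by omega) (by omega)
    rw [hrec]
    exact ⟨(ih.1.pow d).add_of_left hlt, by rw [natDegree_add_eq_left_of_degree_lt hlt, hpow]⟩

theorem monic_sub (hd : 2 ≤ d) (h0 : Γ 0 = 0) (hrec : ∀ m, Γ (m + 1) = Γ m ^ d + X)
    {N n : ℕ} (hn : 1 ≤ n) (hnN : n < N) : (Γ N - Γ n).Monic := by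
  obtain ⟨N, rfl⟩ : ∃ N', N = N' + 1 := ⟨N - 1, by omega⟩
  obtain ⟨n, rfl⟩ : ∃ n', n = n' + 1 := ⟨n - 1, by omega⟩
  obtain ⟨hN, hNdeg⟩ := monic_and_natDegree_succ hd h0 hrec N
  obtain ⟨hn, hndeg⟩ := monic_and_natDegree_succ hd h0 hrec n
  refine hN.sub_of_left ?_
  rw [degree_eq_natDegree hN.ne_zero, degree_eq_natDegree hn.ne_zero, hNdeg, hndeg]
  exact_mod_cast Nat.pow_lt_pow_right (by omega) (by omega)

theorem derivative_succ (hrec : ∀ m, Γ (m + 1) = Γ m ^ d + X) (m : ℕ) :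
    derivative (Γ (m + 1)) = 1 + d * (Γ m ^ (d - 1) * derivative (Γ m)) := by
  rw [hrec, derivative_add, derivative_pow, derivative_X, C_eq_natCast]
  ring

theorem exists_mul_derivative_eq_add_two_mul (h0 : Γ 0 = 0)
    (hrec : ∀ m, Γ (m + 1) = Γ m ^ 2 + X) (m : ℕ) :
    ∃ p, Γ m * derivative (Γ m) = Γ m + 2 * p := by
  cases m with
  | zero => exact ⟨0, by simp [h0]⟩
  | succ m =>
    refine ⟨Γ (m + 1) * (Γ m * derivative (Γ m)), ?_⟩
    rw [derivative_succ hrec]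
    push_cast
    ring

theorem aeval_eq_of_aeval_succ_eq {K : Type*} [Field K] [CharZero K] (hd : 2 ≤ d)
    (h0 : Γ 0 = 0) (hrec : ∀ m, Γ (m + 1) = Γ m ^ d + X) {β : K} (hβ : IsIntegral ℤ β)
    {N n : ℕ} (hnN : n < N) (hg : aeval β (Γ (N + 1)) = aeval β (Γ (n + 1)))
    (hu : aeval β (derivative (Γ (N + 1))) = aeval β (derivative (Γ (n + 1)))) :
    aeval β (Γ N) = aeval β (Γ n) := by
  have hd0 : d ≠ 0 := by omega
  have hpow : aeval β (Γ N) ^ d = aeval β (Γ n) ^ d := by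
    simpa [hrec] using hg
  rcases n with _ | m
  · rw [h0, map_zero, zero_pow hd0] at hpow
    rw [h0, map_zero, pow_eq_zero_iff hd0 |>.1 hpow]
  obtain ⟨M, rfl⟩ : ∃ M, N = M + 1 := ⟨N - 1, by omega⟩
  have hder : aeval β (Γ (M + 1)) ^ (d - 1) * aeval β (derivative (Γ (M + 1))) =
      aeval β (Γ (m + 1)) ^ (d - 1) * aeval β (derivative (Γ (m + 1))) :=
    mul_left_cancel₀ (Nat.cast_ne_zero.2 hd0) <| by
      simpa [derivative_succ hrec (_ + 1), mul_assoc] using hu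
  simp only [derivative_succ hrec, map_add, map_one, map_mul (aeval β) (d : ℤ[X]),
    map_natCast] at hder
  rcases eq_or_eq_neg_of_pow_eq_of_pow_pred_mul_eq hd0 (isIntegral_aeval hβ _)
    (isIntegral_aeval hβ _) hpow hder with h | ⟨rfl, hg', hu'⟩
  · exact h
  obtain ⟨p, hp⟩ := exists_mul_derivative_eq_add_two_mul h0 hrec M
  obtain ⟨q, hq⟩ := exists_mul_derivative_eq_add_two_mul h0 hrec m
  refine absurd ?_ (one_add_two_mul_ne_neg_of_sq_add_eq_neg hβ (isIntegral_aeval hβ (Γ M))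
    (isIntegral_aeval hβ (Γ m)) (isIntegral_aeval hβ p) (isIntegral_aeval hβ q) ?_)
  · simpa [hp, hq, map_ofNat] using hu'
  · simpa [hrec] using hg'

end GleasonPolynomial

open Polynomial in
theorem multiple_root_descends (d : ℕ) (hd : 2 ≤ d)
    (Γ : ℕ → Polynomial ℤ) (h0 : Γ 0 = 0) (hrec : ∀ m, Γ (m + 1) = (Γ m) ^ d + X)
    (N n : ℕ) (hn : 1 ≤ n) (hNn : n < N) :
    ∀ β : AlgebraicClosure ℚ,
      ((Γ N - Γ n).map (Int.castRingHom (AlgebraicClosure ℚ))).eval β = 0 →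
      (derivative ((Γ N - Γ n).map (Int.castRingHom (AlgebraicClosure ℚ)))).eval β = 0 →
      ((Γ (N - 1) - Γ (n - 1)).map (Int.castRingHom (AlgebraicClosure ℚ))).eval β = 0 := by
  intro β hP hP'
  simp only [← algebraMap_int_eq, derivative_map, eval_map_algebraMap] at hP hP' ⊢
  have hβ : IsIntegral ℤ β :=
    ⟨Γ N - Γ n, GleasonPolynomial.monic_sub hd h0 hrec hn hNn, by rwa [← aeval_def]⟩
  obtain ⟨N, rfl⟩ : ∃ N', N = N' + 1 := ⟨N - 1, by omega⟩
  obtain ⟨n, rfl⟩ : ∃ n', n = n' + 1 := ⟨n - 1, by omega⟩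
  rw [map_sub, sub_eq_zero] at hP
  rw [derivative_sub, map_sub, sub_eq_zero] at hP'
  rw [Nat.add_sub_cancel, Nat.add_sub_cancel, map_sub, sub_eq_zero]
  exact GleasonPolynomial.aeval_eq_of_aeval_succ_eq hd h0 hrec hβ (by omega) hP hP'
end

section
/- Let p be prime, d = p^e ≥ 2, and consider Φ(a) = (1/(d-1))·Σ_{i=1}^{d-1}(a_i^d + Σ_{k=1}^{d-1}(-1)^{d-k}(d/k)σ_{d-k} a_i^k) − ā^d − Σ_{k=1}^{d-1}(-1)^{d-k}(d/k)σ_{d-k} ā^k, where ā = (1/(d-1))Σ a_i and σ_j are the elementary symmetric polynomials in a_1, ..., a_{d-1}. Then Φ has coefficients in ℤ_(p) and Φ ≡ 0 (mod p) in ℤ_(p)[a_1, ..., a_{d-1}]. -/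
/-!
Work in `ℤ_(p) ⊂ ℚ`. Since `v_p(k) < e` for `0 < k < d = p^e`, every coefficient
`(-1)^(d-k) d/k` lies in `pℤ_(p)`, so modulo `p` only `t Σ aᵢ^d - (t Σ aᵢ)^d` survives, where
`t = 1/(d-1)` is a `p`-adic unit. Frobenius gives `(Σ aᵢ)^d ≡ Σ aᵢ^d` and Fermat gives `t^d ≡ t`.
-/

open MvPolynomial Finset Valuation

namespace Rat

variable {p : ℕ} [Fact p.Prime]

lemma padicValuation_lt_one_iff {x : ℚ} (hx : x ≠ 0) :
    padicValuation p x < 1 ↔ 0 < padicValRat p x := by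
  simp only [padicValuation, coe_mk, MonoidWithZeroHom.coe_mk, ZeroHom.coe_mk, if_neg hx]
  rw [← WithZero.exp_zero, WithZero.exp_lt_exp]
  exact neg_lt_zero

lemma padicValuation_natCast_pow_div_lt_one {e k : ℕ} (hk0 : 0 < k) (hk : k < p ^ e) :
    padicValuation p ((p : ℚ) ^ e / k) < 1 := by
  have hp := (Fact.out : p.Prime)
  have hvk : padicValNat p k < e := by
    by_contra! h
    exact Nat.not_dvd_of_pos_of_lt hk0 hk ((padicValNat_dvd_iff_le hk0.ne').2 h)
  have hp0 : (p : ℚ) ≠ 0 := by exact_mod_cast hp.ne_zero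
  have hk0' : (k : ℚ) ≠ 0 := by exact_mod_cast hk0.ne'
  rw [padicValuation_lt_one_iff (div_ne_zero (pow_ne_zero _ hp0) hk0'),
    padicValRat.div (pow_ne_zero _ hp0) hk0',
    ← Nat.cast_pow, padicValRat.of_nat, padicValRat.of_nat, padicValNat.prime_pow]
  omega

lemma padicValuation_intCast_inv {n : ℤ} (hn : ¬ (p : ℤ) ∣ n) :
    padicValuation p (n : ℚ)⁻¹ = 1 := by
  rw [map_inv₀, padicValuation_cast, Int.padicValuation_eq_one_iff.2 hn, inv_one]

lemma padicValuation_intCast_inv_pow_sub_lt_one {n : ℤ} (hn : ¬ (p : ℤ) ∣ n) (e : ℕ) :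
    padicValuation p ((n : ℚ)⁻¹ ^ p ^ e - (n : ℚ)⁻¹) < 1 := by
  have hn0 : (n : ℚ) ≠ 0 := by rintro h; simp_all
  have hfermat : (p : ℤ) ∣ n - n ^ p ^ e := by
    rw [← ZMod.intCast_zmod_eq_zero_iff_dvd]
    push_cast
    rw [ZMod.pow_card_pow, sub_self]
  have : (n : ℚ)⁻¹ ^ p ^ e - (n : ℚ)⁻¹ = (n : ℚ)⁻¹ ^ (p ^ e + 1) * ((n - n ^ p ^ e : ℤ) : ℚ) := by
    have h1 : (n : ℚ)⁻¹ * n = 1 := inv_mul_cancel₀ hn0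
    have h2 : (n : ℚ)⁻¹ ^ p ^ e * n ^ p ^ e = 1 := by rw [← mul_pow, h1, one_pow]
    push_cast
    linear_combination (-(n : ℚ)⁻¹ ^ p ^ e) * h1 + (n : ℚ)⁻¹ * h2
  rw [this, map_mul, map_pow, padicValuation_intCast_inv hn, one_pow, one_mul,
    padicValuation_cast]
  exact Int.padicValuation_lt_one_iff.2 hfermat

end Rat

namespace MvPolynomial

variable (p : ℕ) [Fact p.Prime] (σ : Type*)

/-- `ℤ_(p)[σ]`, as a subring of `ℚ[σ]`. -/
noncomputable abbrev padicIntegral : Subring (MvPolynomial σ ℚ) :=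
  (map (algebraMap (Rat.padicValuation p).integer ℚ)).range

/-- `p ℤ_(p)[σ]`, the polynomials that vanish modulo `p`. -/
abbrev padicDivisible : Submodule (Rat.padicValuation p).integer (MvPolynomial σ ℚ) :=
  coeffsIn σ (ltSubmodule (Rat.padicValuation p) 1)

variable {p σ}

lemma X_mem_padicIntegral (i : σ) : X i ∈ padicIntegral p σ := ⟨X i, map_X _ _⟩

lemma esymm_mem_padicIntegral [Fintype σ] (k : ℕ) : esymm σ ℚ k ∈ padicIntegral p σ :=
  ⟨esymm σ _ k, map_esymm _ _ _ _⟩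

lemma smul_mem_padicIntegral {t : ℚ} (ht : Rat.padicValuation p t ≤ 1) {P : MvPolynomial σ ℚ}
    (hP : P ∈ padicIntegral p σ) : t • P ∈ padicIntegral p σ := by
  rw [smul_eq_C_mul]
  exact mul_mem ⟨C ⟨t, ht⟩, map_C _ _⟩ hP

lemma smul_mem_padicDivisible {a : ℚ} (ha : Rat.padicValuation p a < 1) {P : MvPolynomial σ ℚ}
    (hP : P ∈ padicIntegral p σ) : a • P ∈ padicDivisible p σ := by
  obtain ⟨Q, rfl⟩ := hP
  intro m
  rw [coeff_smul, coeff_map, smul_eq_mul, mem_ltSubmodule_iff, map_mul, Units.val_one]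
  exact mul_lt_one_of_lt_of_le ha (Q.coeff m).prop

lemma map_intCast_mem_padicDivisible_of_map_zmod_eq_zero {A : MvPolynomial σ ℤ}
    (hA : map (Int.castRingHom (ZMod p)) A = 0) :
    map (Int.castRingHom ℚ) A ∈ padicDivisible p σ := by
  intro m
  have hm : ((A.coeff m : ℤ) : ZMod p) = 0 := by
    simpa only [coeff_map, eq_intCast, coeff_zero] using congr_arg (coeff m) hA
  rw [coeff_map, mem_ltSubmodule_iff, Units.val_one, eq_intCast, Rat.padicValuation_cast]
  exact Int.padicValuation_lt_one_iff.2 ((ZMod.intCast_zmod_eq_zero_iff_dvd _ _).1 hm)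

lemma sum_X_pow_sub_sum_X_pow_mem_padicDivisible [Fintype σ] (e : ℕ) :
    (∑ i, X i) ^ p ^ e - ∑ i, X i ^ p ^ e ∈ padicDivisible p σ := by
  have := map_intCast_mem_padicDivisible_of_map_zmod_eq_zero (p := p)
    (A := (∑ i : σ, X i) ^ p ^ e - ∑ i, X i ^ p ^ e) (by simp [sum_pow_char_pow])
  simpa using this

lemma smul_sum_X_pow_sub_pow_mem_padicDivisible [Fintype σ] {t : ℚ} {e : ℕ}
    (ht : Rat.padicValuation p t ≤ 1) (hfrob : Rat.padicValuation p (t ^ p ^ e - t) < 1) :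
    t • ∑ i : σ, X i ^ p ^ e - (t • ∑ i, X i) ^ p ^ e ∈ padicDivisible p σ := by
  have hsplit : t • ∑ i : σ, X i ^ p ^ e - (t • ∑ i : σ, X i) ^ p ^ e =
      (t - t ^ p ^ e) • ∑ i, X i ^ p ^ e -
        t ^ p ^ e • ((∑ i, X i) ^ p ^ e - ∑ i, X i ^ p ^ e : MvPolynomial σ ℚ) := by
    rw [smul_pow]
    module
  have htq : Rat.padicValuation p (t ^ p ^ e) ≤ 1 := by
    rw [map_pow]; exact pow_le_one' ht _
  rw [hsplit]
  refine sub_mem (smul_mem_padicDivisible ?_ ?_)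
    (Submodule.smul_mem _ (⟨t ^ p ^ e, htq⟩ : (Rat.padicValuation p).integer)
      (sum_X_pow_sub_sum_X_pow_mem_padicDivisible e))
  · rwa [map_sub_swap]
  · exact sum_mem fun i _ => pow_mem (X_mem_padicIntegral i) _

lemma sum_smul_mul_pow_mem_padicDivisible {s : Finset ℕ} {c : ℕ → ℚ}
    {E : ℕ → MvPolynomial σ ℚ} {y : MvPolynomial σ ℚ}
    (hc : ∀ k ∈ s, Rat.padicValuation p (c k) < 1) (hE : ∀ k ∈ s, E k ∈ padicIntegral p σ)
    (hy : y ∈ padicIntegral p σ) : ∑ k ∈ s, c k • (E k * y ^ k) ∈ padicDivisible p σ :=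
  sum_mem fun k hk => smul_mem_padicDivisible (hc k hk) (mul_mem (hE k hk) (pow_mem hy k))

end MvPolynomial

open MvPolynomial in
theorem phi_integral_and_congr_zero_general (p e : ℕ) (hp : p.Prime) (he : 1 ≤ e)
    (d : ℕ) (hd : d = p ^ e)
    (abar : MvPolynomial (Fin (d - 1)) ℚ)
    (habar : abar = (1 / ((d : ℚ) - 1)) • ∑ i, X i)
    (Φ : MvPolynomial (Fin (d - 1)) ℚ)
    (hΦ : Φ = (1 / ((d : ℚ) - 1)) •
        (∑ i, ((X i) ^ d + ∑ k ∈ Finset.Icc 1 (d - 1),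
          ((-1 : ℚ) ^ (d - k) * ((d : ℚ) / (k : ℚ))) •
            (esymm (Fin (d - 1)) ℚ (d - k) * (X i) ^ k)))
      - (abar ^ d + ∑ k ∈ Finset.Icc 1 (d - 1),
          ((-1 : ℚ) ^ (d - k) * ((d : ℚ) / (k : ℚ))) •
            (esymm (Fin (d - 1)) ℚ (d - k) * abar ^ k))) :
    ∀ m, Φ.coeff m ≠ 0 → 1 ≤ padicValRat p (Φ.coeff m) := by
  have : Fact p.Prime := ⟨hp⟩
  subst hd habar
  have hunit : ¬ (p : ℤ) ∣ ((p ^ e : ℕ) - 1 : ℤ) := fun h => hp.not_dvd_one <| by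
    have := dvd_sub (dvd_pow_self (p : ℤ) (by omega : e ≠ 0)) h
    exact_mod_cast (by simpa using this : (p : ℤ) ∣ 1)
  set t : ℚ := 1 / (((p ^ e : ℕ) : ℚ) - 1)
  have ht_eq : t = (((p ^ e : ℕ) - 1 : ℤ) : ℚ)⁻¹ := by simp [t]
  have ht : Rat.padicValuation p t ≤ 1 := (ht_eq ▸ Rat.padicValuation_intCast_inv hunit).le
  have hfrob : Rat.padicValuation p (t ^ p ^ e - t) < 1 :=
    ht_eq ▸ Rat.padicValuation_intCast_inv_pow_sub_lt_one hunit e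
  have hc : ∀ k ∈ Icc 1 (p ^ e - 1),
      Rat.padicValuation p ((-1 : ℚ) ^ (p ^ e - k) * (((p ^ e : ℕ) : ℚ) / (k : ℚ))) < 1 := by
    intro k hk
    have hpe : 0 < p ^ e := pow_pos hp.pos e
    rw [map_mul, map_pow, Valuation.map_neg, map_one, one_pow, one_mul, Nat.cast_pow]
    exact Rat.padicValuation_natCast_pow_div_lt_one (mem_Icc.1 hk).1
      (by have := (mem_Icc.1 hk).2; omega)
  have hΦp : Φ ∈ padicDivisible p (Fin (p ^ e - 1)) := by
    rw [hΦ, sum_add_distrib, smul_add, add_sub_add_comm]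
    refine add_mem (smul_sum_X_pow_sub_pow_mem_padicDivisible ht hfrob) (sub_mem ?_ ?_)
    · exact Submodule.smul_mem _ (⟨t, ht⟩ : (Rat.padicValuation p).integer)
        (sum_mem fun i _ => sum_smul_mul_pow_mem_padicDivisible hc
          (fun k _ => esymm_mem_padicIntegral _) (X_mem_padicIntegral i))
    · exact sum_smul_mul_pow_mem_padicDivisible hc (fun k _ => esymm_mem_padicIntegral _)
        (smul_mem_padicIntegral ht (sum_mem fun i _ => X_mem_padicIntegral i))
  intro m hm
  exact (Rat.padicValuation_lt_one_iff hm).1 (hΦp m)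

open MvPolynomial in
theorem phi_integral_and_congr_zero (p e : ℕ) (hp : p.Prime) (he : 1 ≤ e)
    (d : ℕ) (hd : d = p ^ e) (hd2 : 2 ≤ d)
    (abar : MvPolynomial (Fin (d - 1)) ℚ)
    (habar : abar = (1 / ((d : ℚ) - 1)) • ∑ i, X i)
    (Φ : MvPolynomial (Fin (d - 1)) ℚ)
    (hΦ : Φ = (1 / ((d : ℚ) - 1)) •
        (∑ i, ((X i) ^ d + ∑ k ∈ Finset.Icc 1 (d - 1),
          ((-1 : ℚ) ^ (d - k) * ((d : ℚ) / (k : ℚ))) •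
            (esymm (Fin (d - 1)) ℚ (d - k) * (X i) ^ k)))
      - (abar ^ d + ∑ k ∈ Finset.Icc 1 (d - 1),
          ((-1 : ℚ) ^ (d - k) * ((d : ℚ) / (k : ℚ))) •
            (esymm (Fin (d - 1)) ℚ (d - k) * abar ^ k))) :
    ∀ m, Φ.coeff m ≠ 0 → 1 ≤ padicValRat p (Φ.coeff m) :=
  phi_integral_and_congr_zero_general p e hp he d hd abar habar Φ hΦ
end
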